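/- arXiv:1809.10127 — 2 statements merged into one kernel-verified Lean document; each statement's English description precedes it below -/
import Mathlib

section
/- Let F(X, Y) ∈ ℤ_p[[X, Y]] be a nonzero power series, written as F = p^a · G with G ∉ p·ℤ_p[[X,Y]]. There exist integers b, c ≥ 0 and n_0 such that for all pairs (w_1, w_2) of p-power roots of unity with ord(w_1) = m, ord(w_2) = n, m ≥ n_0, and n − m sufficiently large, one has ord_p(F(w_1 − 1, w_2 − 1)) = a + b/φ(p^m) + c/φ(p^n). -/
open Finset

/-!
Write `v` also for the additive valuation it defines on `K` (with `v 0 = ⊤`). For a primitive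
`p^m`-th root of unity `ζ`, the elements `ζ' - 1`, `ζ'` running over the conjugates of `ζ`, all
have the same valuation (each of `ζ, ζ'` is a power of the other, and `(ζ^k - 1)/(ζ - 1)` is
integral), and their product is `Φ_{p^m}(1) = p`; hence `v (ζ - 1) = 1/φ(p^m)`. The term
`p^a g_{ij} (w₁ - 1)^i (w₂ - 1)^j` of `F` therefore has valuation
`a + v(g_{ij}) + i/φ(p^m) + j/φ(p^n)`. Let `(b, c)` be the lexicographically least index with
`p ∤ g_{bc}`. Once `b + c < φ(p^m)` and `c < p^(n-m)`, every other term has strictly larger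
valuation: terms with `p ∣ g_{ij}` gain at least `1 > b/φ(p^m) + c/φ(p^n)`, and the others are
lexicographically later, where `c/φ(p^n) < 1/φ(p^m)` makes a larger `i` outweigh any decrease in
`j`. So the partial sums, and by the ultrametric inequality their limit, have valuation
`a + b/φ(p^m) + c/φ(p^n)`.
-/

namespace AddValuation

section Basic

variable {R Γ₀ : Type*} [CommRing R] [LinearOrderedAddCommMonoidWithTop Γ₀]

theorem map_prod (v : AddValuation R Γ₀) {ι : Type*} (s : Finset ι) (f : ι → R) :
    v (∏ i ∈ s, f i) = ∑ i ∈ s, v (f i) :=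
  _root_.map_prod (toValuation v) f s

theorem map_sum_eq_of_lt (v : AddValuation R Γ₀) {ι : Type*} [DecidableEq ι] {s : Finset ι}
    {f : ι → R} {j : ι} (hj : j ∈ s) (hf : ∀ i ∈ s \ {j}, v (f j) < v (f i)) :
    v (∑ i ∈ s, f i) = v (f j) :=
  Valuation.map_sum_eq_of_lt (toValuation v) hj hf

end Basic

variable {K : Type*} [Field K]

-- The hypotheses say nothing about `v 0`, which is replaced by `⊤`.
open Classical in
noncomputable def ofNeZero (v : K → ℚ)
    (hmul : ∀ x y : K, x ≠ 0 → y ≠ 0 → v (x * y) = v x + v y)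
    (hadd : ∀ x y : K, x ≠ 0 → y ≠ 0 → x + y ≠ 0 → min (v x) (v y) ≤ v (x + y)) :
    AddValuation K (WithTop ℚ) :=
  AddValuation.of (fun x => if x = 0 then ⊤ else (v x : WithTop ℚ)) (if_pos rfl)
    (by
      have h := hmul 1 1 one_ne_zero one_ne_zero
      rw [mul_one, left_eq_add] at h
      simp [h])
    (fun x y => by
      by_cases hx : x = 0
      · simp [hx]
      by_cases hy : y = 0
      · simp [hy]
      by_cases hxy : x + y = 0
      · simp [hxy]
      simp only [if_neg hx, if_neg hy, if_neg hxy, ← WithTop.coe_min, WithTop.coe_le_coe]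
      exact hadd x y hx hy hxy)
    (fun x y => by
      by_cases hx : x = 0
      · simp [hx]
      by_cases hy : y = 0
      · simp [hy]
      simp [hx, hy, hmul x y hx hy])

theorem ofNeZero_apply {v : K → ℚ} {hmul hadd} {x : K} (hx : x ≠ 0) :
    ofNeZero v hmul hadd x = v x := by
  simp [ofNeZero, hx]

theorem ofNeZero_eq_of_approx {v : K → ℚ} {hmul hadd} {y : K} {s : ℕ → K} {r : ℚ}
    (hy : ∀ B : ℚ, ∃ D₀ : ℕ, ∀ D : ℕ, D₀ ≤ D → y = s D ∨ B ≤ v (y - s D))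
    (hs : ∀ᶠ D in Filter.atTop, ofNeZero v hmul hadd (s D) = r) : v y = r := by
  obtain ⟨D₁, hD₁⟩ := Filter.eventually_atTop.1 hs
  obtain ⟨D₀, hD₀⟩ := hy (r + 1)
  have hsD := hD₁ (max D₀ D₁) (le_max_right _ _)
  have hVy : ofNeZero v hmul hadd y = r := by
    rw [← hsD]
    rcases hD₀ (max D₀ D₁) (le_max_left _ _) with heq | hle
    · rw [heq]
    refine map_eq_of_lt_sub _ ?_
    by_cases h0 : y - s (max D₀ D₁) = 0
    · rw [h0, map_zero, hsD]
      exact WithTop.coe_lt_top r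
    · rw [ofNeZero_apply h0, hsD, WithTop.coe_lt_coe]
      linarith
  have hy0 : y ≠ 0 := (ofNeZero v hmul hadd).ne_top_iff.1 (hVy ▸ WithTop.coe_ne_top)
  exact WithTop.coe_injective ((ofNeZero_apply hy0).symm.trans hVy)

section RootsOfUnity

variable (v : AddValuation K (WithTop ℚ))

theorem map_eq_zero_of_pow_eq_one {ζ : K} {n : ℕ} (hζ : ζ ^ n = 1) (hn : n ≠ 0) :
    v ζ = 0 := by
  have hζ0 : ζ ≠ 0 := by rintro rfl; simp [hn] at hζ
  obtain ⟨q, hq⟩ := WithTop.ne_top_iff_exists.1 ((v.ne_top_iff).2 hζ0)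
  have h := v.map_pow ζ n
  rw [hζ, v.map_one, ← hq, ← WithTop.coe_nsmul, ← WithTop.coe_zero, WithTop.coe_eq_coe,
    nsmul_eq_mul] at h
  rw [← hq, (mul_eq_zero.1 h.symm).resolve_left (by exact_mod_cast hn), WithTop.coe_zero]

theorem map_sub_one_le_map_pow_sub_one {ζ : K} {n : ℕ} (hζ : ζ ^ n = 1) (hn : n ≠ 0)
    (k : ℕ) :
    v (ζ - 1) ≤ v (ζ ^ k - 1) := by
  have hgeom : 0 ≤ v (∑ i ∈ range k, ζ ^ i) := v.map_le_sum fun i _ => by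
    rw [v.map_pow, v.map_eq_zero_of_pow_eq_one hζ hn, nsmul_zero]
  rw [← geom_sum_mul, v.map_mul]
  exact le_add_of_nonneg_left hgeom

theorem map_sub_one_eq_of_isPrimitiveRoot {ζ ξ : K} {n : ℕ} [NeZero n]
    (hζ : IsPrimitiveRoot ζ n) (hξ : IsPrimitiveRoot ξ n) : v (ξ - 1) = v (ζ - 1) := by
  obtain ⟨i, -, rfl⟩ := hζ.eq_pow_of_pow_eq_one hξ.pow_eq_one
  obtain ⟨j, -, hj⟩ := hξ.eq_pow_of_pow_eq_one hζ.pow_eq_one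
  refine le_antisymm ?_ (v.map_sub_one_le_map_pow_sub_one hζ.pow_eq_one (NeZero.ne n) i)
  calc v (ζ ^ i - 1) ≤ v ((ζ ^ i) ^ j - 1) :=
        v.map_sub_one_le_map_pow_sub_one hξ.pow_eq_one (NeZero.ne n) j
    _ = v (ζ - 1) := by rw [hj]

theorem totient_nsmul_map_sub_one {p : ℕ} [Fact p.Prime] {ζ : K} {k : ℕ}
    (hζ : IsPrimitiveRoot ζ (p ^ (k + 1))) :
    (p ^ (k + 1)).totient • v (ζ - 1) = v (p : K) := by
  have hpos : 0 < p ^ (k + 1) := pow_pos (Fact.out : p.Prime).pos _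
  have heval := Polynomial.eval_one_cyclotomic_prime_pow (R := K) (p := p) k
  rw [Polynomial.cyclotomic_eq_prod_X_sub_primitiveRoots hζ, Polynomial.eval_prod] at heval
  simp only [Polynomial.eval_sub, Polynomial.eval_X, Polynomial.eval_C] at heval
  rw [← heval, v.map_prod, ← hζ.card_primitiveRoots, ← Finset.sum_const]
  have : NeZero (p ^ (k + 1)) := ⟨hpos.ne'⟩
  refine Finset.sum_congr rfl fun μ hμ => ?_
  rw [v.map_sub_swap 1 μ]
  exact (v.map_sub_one_eq_of_isPrimitiveRoot hζ ((mem_primitiveRoots hpos).1 hμ)).symm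

theorem map_sub_one_of_isPrimitiveRoot {p : ℕ} [Fact p.Prime] (hp : v (p : K) = 1) {ζ : K}
    {m : ℕ} (hm : m ≠ 0) (hζ : IsPrimitiveRoot ζ (p ^ m)) :
    v (ζ - 1) = ((1 / (p ^ m).totient : ℚ) : WithTop ℚ) := by
  obtain ⟨k, rfl⟩ := Nat.exists_eq_succ_of_ne_zero hm
  have h := v.totient_nsmul_map_sub_one hζ
  have hne : v (ζ - 1) ≠ ⊤ := v.ne_top_iff.2 <| sub_ne_zero.2 <|
    hζ.ne_one (Nat.one_lt_pow (Nat.succ_ne_zero k) (Fact.out : p.Prime).one_lt)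
  obtain ⟨q, hq⟩ := WithTop.ne_top_iff_exists.1 hne
  have htot : ((p ^ (k + 1)).totient : ℚ) ≠ 0 := by
    exact_mod_cast (Nat.totient_pos.2 (pow_pos (Fact.out : p.Prime).pos _)).ne'
  rw [← hq, hp, ← WithTop.coe_nsmul, ← WithTop.coe_one, WithTop.coe_eq_coe, nsmul_eq_mul] at h
  rw [← hq, WithTop.coe_eq_coe, eq_div_iff htot, mul_comm, h]

end RootsOfUnity

end AddValuation

namespace PadicInt

variable {p : ℕ} [Fact p.Prime]

theorem valuation_eq_zero_of_not_dvd {x : ℤ_[p]} (h : ¬ (p : ℤ_[p]) ∣ x) :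
    x.valuation = 0 := by
  have hx : x ≠ 0 := by rintro rfl; exact h (dvd_zero _)
  by_contra hv
  rw [unitCoeff_spec hx] at h
  exact h (Dvd.dvd.mul_left (dvd_pow_self _ hv) _)

theorem injective_of_map_p_ne_zero {R : Type*} [Ring R] [IsDomain R] (f : ℤ_[p] →+* R)
    (hf : f p ≠ 0) : Function.Injective f := by
  refine (injective_iff_map_eq_zero f).2 fun x hfx => by_contra fun hx => ?_
  rw [unitCoeff_spec hx, map_mul, map_pow] at hfx
  exact mul_ne_zero ((unitCoeff hx).isUnit.map f).ne_zero (pow_ne_zero _ hf) hfx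

end PadicInt

theorem weighted_sum_lt_of_toLex_lt {k : Type*} [CommRing k] [LinearOrder k]
    [IsStrictOrderedRing k] {b c i j : ℕ} {α β : k} (h : toLex (b, c) < toLex (i, j))
    (hβ : 0 < β) (hcβ : c * β < α) : b * α + c * β < i * α + j * β := by
  have hcβ0 : 0 ≤ (c : k) * β := by positivity
  have hjβ0 : 0 ≤ (j : k) * β := by positivity
  rcases Prod.Lex.toLex_lt_toLex.1 h with hbi | ⟨rfl, hcj⟩
  · have : (b : k) + 1 ≤ i := by exact_mod_cast hbi
    nlinarith
  · have : (c : k) < j := by exact_mod_cast hcj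
    nlinarith

theorem exists_forall_toLex_le (P : ℕ → ℕ → Prop) (h : ∃ i j, P i j) :
    ∃ b c, P b c ∧ ∀ i j, P i j → toLex (b, c) ≤ toLex (i, j) := by
  obtain ⟨⟨b, c⟩, hbc, hmin⟩ := WellFounded.has_min (α := ℕ ×ₗ ℕ) wellFounded_lt
    {d | P (ofLex d).1 (ofLex d).2} (by obtain ⟨i, j, hij⟩ := h; exact ⟨toLex (i, j), hij⟩)
  exact ⟨b, c, hbc, fun i j hij => not_lt.1 (hmin (toLex (i, j)) hij)⟩

theorem Nat.le_totient_prime_pow {p : ℕ} (hp : p.Prime) (m : ℕ) : m ≤ (p ^ m).totient := by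
  rcases m with _ | k
  · exact Nat.zero_le _
  rw [Nat.totient_prime_pow_succ hp]
  calc k + 1 ≤ 2 ^ k := Nat.lt_two_pow_self
    _ ≤ p ^ k := Nat.pow_le_pow_left hp.two_le k
    _ ≤ p ^ k * (p - 1) := Nat.le_mul_of_pos_right _ (by have := hp.two_le; omega)

theorem Nat.totient_prime_pow_add {p : ℕ} (hp : p.Prime) (k : ℕ) {m : ℕ} (hm : m ≠ 0) :
    (p ^ (k + m)).totient = p ^ k * (p ^ m).totient := by
  obtain ⟨m, rfl⟩ : ∃ m', m = m' + 1 := ⟨m - 1, by omega⟩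
  rw [← add_assoc, Nat.totient_prime_pow_succ hp, Nat.totient_prime_pow_succ hp, pow_add,
    mul_assoc]

theorem mul_one_div_totient_lt {p : ℕ} (hp : p.Prime) {c m n : ℕ} (hm : m ≠ 0)
    (hn : m + c ≤ n) : (c : ℚ) * (1 / (p ^ n).totient) < 1 / (p ^ m).totient := by
  obtain ⟨d, hd, rfl⟩ : ∃ d, c ≤ d ∧ n = d + m := ⟨n - m, by omega, by omega⟩
  have hφ : (0 : ℚ) < (p ^ m).totient := by
    exact_mod_cast Nat.totient_pos.2 (pow_pos hp.pos m)
  have hc : (c : ℚ) < p ^ d := by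
    exact_mod_cast (Nat.lt_pow_self hp.one_lt).trans_le (Nat.pow_le_pow_right hp.pos hd)
  rw [Nat.totient_prime_pow_add hp d hm, mul_one_div, Nat.cast_mul, Nat.cast_pow,
    div_lt_div_iff₀ (mul_pos (pow_pos (Nat.cast_pos.2 hp.pos) d) hφ) hφ]
  nlinarith

theorem add_mul_one_div_totient_lt_one {p : ℕ} (hp : p.Prime) {b c m n : ℕ}
    (hm : b + c + 1 ≤ m) (hn : m ≤ n) :
    (b : ℚ) * (1 / (p ^ m).totient) + c * (1 / (p ^ n).totient) < 1 := by
  have hφm : (b + c : ℚ) < (p ^ m).totient := by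
    exact_mod_cast (show b + c < m by omega).trans_le (Nat.le_totient_prime_pow hp m)
  have hφpos : (0 : ℚ) < (p ^ m).totient := by
    exact_mod_cast Nat.totient_pos.2 (pow_pos hp.pos m)
  have hφ : ((p ^ m).totient : ℚ) ≤ (p ^ n).totient := by
    exact_mod_cast Nat.le_of_dvd (Nat.totient_pos.2 (pow_pos hp.pos n))
      (Nat.totient_dvd_of_dvd (pow_dvd_pow p hn))
  calc (b : ℚ) * (1 / (p ^ m).totient) + c * (1 / (p ^ n).totient)
      ≤ b * (1 / (p ^ m).totient) + c * (1 / (p ^ m).totient) := by gcongr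
    _ = (b + c) / (p ^ m).totient := by ring
    _ < 1 := (div_lt_one hφpos).2 hφm

namespace MvPowerSeries

noncomputable abbrev coeff₂ {R : Type*} [Semiring R] (i j : ℕ) (F : MvPowerSeries (Fin 2) R) :
    R :=
  coeff (Finsupp.single 0 i + Finsupp.single 1 j) F

theorem coeff₂_eq_coeff {R : Type*} [Semiring R] (F : MvPowerSeries (Fin 2) R)
    (d : Fin 2 →₀ ℕ) : coeff₂ (d 0) (d 1) F = coeff d F := by
  have hd : Finsupp.single 0 (d 0) + Finsupp.single 1 (d 1) = d := by
    ext i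
    fin_cases i <;> simp
  rw [coeff₂, hd]

noncomputable def squarePartialSum {R K : Type*} [CommSemiring R] [CommSemiring K]
    [Algebra R K] (F : MvPowerSeries (Fin 2) R) (x y : K) (D : ℕ) : K :=
  ∑ d ∈ range D ×ˢ range D, algebraMap R K (coeff₂ d.1 d.2 F) * x ^ d.1 * y ^ d.2

end MvPowerSeries

def AddValuation.ExtendsPadicValuation (p : ℕ) [Fact p.Prime] {K : Type*} [Field K]
    [Algebra ℤ_[p] K] (V : AddValuation K (WithTop ℚ)) : Prop :=
  ∀ x : ℤ_[p], x ≠ 0 → V (algebraMap ℤ_[p] K x) = ((x.valuation : ℚ) : WithTop ℚ)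

section PadicExtension

open MvPowerSeries

variable {p : ℕ} [Fact p.Prime] {K : Type*} [Field K] [Algebra ℤ_[p] K]

theorem algebraMap_padicInt_injective {v : K → ℚ}
    (hv : ∀ x : ℤ_[p], x ≠ 0 → v (algebraMap ℤ_[p] K x) = x.valuation) :
    Function.Injective (algebraMap ℤ_[p] K) := by
  refine PadicInt.injective_of_map_p_ne_zero _ fun hp => ?_
  have h1 := hv p (NeZero.ne _)
  have h2 := hv (p ^ 2) (pow_ne_zero _ (NeZero.ne _))
  rw [map_pow, hp, zero_pow two_ne_zero] at h2
  rw [hp] at h1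
  simp [h1] at h2

theorem AddValuation.ofNeZero_extendsPadicValuation {v : K → ℚ} {hmul hadd}
    (hv : ∀ x : ℤ_[p], x ≠ 0 → v (algebraMap ℤ_[p] K x) = x.valuation) :
    (AddValuation.ofNeZero v hmul hadd).ExtendsPadicValuation p := fun x hx => by
  rw [AddValuation.ofNeZero_apply ((map_ne_zero_iff _ (algebraMap_padicInt_injective hv)).2 hx),
    hv x hx]

namespace AddValuation.ExtendsPadicValuation

variable {V : AddValuation K (WithTop ℚ)}

theorem map_p (hV : V.ExtendsPadicValuation p) : V (p : K) = 1 := by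
  rw [← map_natCast (algebraMap ℤ_[p] K), hV _ (NeZero.ne _), PadicInt.valuation_p]
  simp

theorem map_algebraMap_of_not_dvd (hV : V.ExtendsPadicValuation p) {x : ℤ_[p]}
    (h : ¬ (p : ℤ_[p]) ∣ x) :
    V (algebraMap ℤ_[p] K x) = 0 := by
  rw [hV x (by rintro rfl; exact h (dvd_zero _)), PadicInt.valuation_eq_zero_of_not_dvd h]
  simp

theorem one_le_map_algebraMap_of_dvd (hV : V.ExtendsPadicValuation p) {x : ℤ_[p]}
    (h : (p : ℤ_[p]) ∣ x) :
    1 ≤ V (algebraMap ℤ_[p] K x) := by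
  obtain ⟨y, rfl⟩ := h
  rw [_root_.map_mul, V.map_mul, _root_.map_natCast, hV.map_p]
  refine le_add_of_nonneg_right ?_
  by_cases hy : y = 0
  · simp [hy]
  · rw [hV y hy]
    exact WithTop.coe_nonneg.2 (Nat.cast_nonneg _)

theorem map_algebraMap_p_pow (hV : V.ExtendsPadicValuation p) (a : ℕ) :
    V (algebraMap ℤ_[p] K ((p : ℤ_[p]) ^ a)) = (a : ℚ) := by
  rw [_root_.map_pow, V.map_pow, _root_.map_natCast, hV.map_p]
  simp

theorem map_squarePartialSum_C_mul (hV : V.ExtendsPadicValuation p) (a : ℕ)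
    {G : MvPowerSeries (Fin 2) ℤ_[p]} {b c : ℕ} (hbc : ¬ (p : ℤ_[p]) ∣ coeff₂ b c G)
    (hmin : ∀ i j, ¬ (p : ℤ_[p]) ∣ coeff₂ i j G → toLex (b, c) ≤ toLex (i, j))
    {x y : K} {α β : ℚ} (hx : V x = α) (hy : V y = β) (hβ : 0 < β) (hcβ : c * β < α)
    (hsmall : b * α + c * β < 1) {D : ℕ} (hbD : b < D) (hcD : c < D) :
    V (squarePartialSum (C ((p : ℤ_[p]) ^ a) * G) x y D) =
      ((a + b * α + c * β : ℚ) : WithTop ℚ) := by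
  classical
  have hα : 0 ≤ α := by
    have : (0 : ℚ) ≤ c * β := by positivity
    linarith
  have hterm : ∀ i j : ℕ,
      V (algebraMap ℤ_[p] K (coeff₂ i j (C ((p : ℤ_[p]) ^ a) * G)) * x ^ i * y ^ j) =
        ((a + i * α + j * β : ℚ) : WithTop ℚ) +
          V (algebraMap ℤ_[p] K (coeff₂ i j G)) := by
    intro i j
    rw [show coeff₂ i j (C ((p : ℤ_[p]) ^ a) * G) = (p : ℤ_[p]) ^ a * coeff₂ i j G from
      coeff_C_mul _ _ _, _root_.map_mul (algebraMap ℤ_[p] K), V.map_mul, V.map_mul, V.map_mul,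
      V.map_pow, V.map_pow, hV.map_algebraMap_p_pow, hx, hy, ← WithTop.coe_nsmul,
      ← WithTop.coe_nsmul, nsmul_eq_mul, nsmul_eq_mul]
    push_cast
    abel
  rw [squarePartialSum, V.map_sum_eq_of_lt (j := (b, c)) (by simp [hbD, hcD])]
  · rw [hterm, hV.map_algebraMap_of_not_dvd hbc, add_zero]
  rintro ⟨i, j⟩ hij
  dsimp only
  have hne : toLex (b, c) ≠ toLex (i, j) := by simpa [eq_comm] using (mem_sdiff.1 hij).2
  rw [hterm, hterm, hV.map_algebraMap_of_not_dvd hbc, add_zero]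
  by_cases hdvd : (p : ℤ_[p]) ∣ coeff₂ i j G
  · calc ((a + b * α + c * β : ℚ) : WithTop ℚ)
          < ((a + i * α + j * β : ℚ) : WithTop ℚ) + 1 := by
          rw [← WithTop.coe_one, ← WithTop.coe_add, WithTop.coe_lt_coe]
          have : (0 : ℚ) ≤ i * α + j * β := by positivity
          linarith
      _ ≤ _ := add_le_add_right (hV.one_le_map_algebraMap_of_dvd hdvd) _
  · rw [hV.map_algebraMap_of_not_dvd hdvd, add_zero, WithTop.coe_lt_coe]
    linarith [weighted_sum_lt_of_toLex_lt ((hmin i j hdvd).lt_of_ne hne) hβ hcβ]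

end AddValuation.ExtendsPadicValuation

end PadicExtension

theorem weierstrass_valuation_of_power_series_general (p : ℕ) [Fact p.Prime]
    (K : Type*) [Field K] [Algebra ℤ_[p] K] (v : K → ℚ)
    (hmul : ∀ x y : K, x ≠ 0 → y ≠ 0 → v (x * y) = v x + v y)
    (hadd : ∀ x y : K, x ≠ 0 → y ≠ 0 → x + y ≠ 0 → min (v x) (v y) ≤ v (x + y))
    (hcompat : ∀ x : ℤ_[p], x ≠ 0 → v (algebraMap ℤ_[p] K x) = (x.valuation : ℚ))
    (F : MvPowerSeries (Fin 2) ℤ_[p])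
    (a : ℕ) (G : MvPowerSeries (Fin 2) ℤ_[p])
    (hFG : F = (MvPowerSeries.C (σ := Fin 2) (R := ℤ_[p]) ((p : ℤ_[p]) ^ a)) * G)
    (hG : ∃ d : (Fin 2) →₀ ℕ, ¬ (p : ℤ_[p]) ∣ MvPowerSeries.coeff (R := ℤ_[p]) d G) :
    ∃ (b c n₀ N : ℕ), ∀ m n : ℕ, n₀ ≤ m → m + N ≤ n →
      ∀ w₁ w₂ : K, IsPrimitiveRoot w₁ (p ^ m) → IsPrimitiveRoot w₂ (p ^ n) →
      ∀ y : K,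
        (∀ B : ℚ, ∃ D₀ : ℕ, ∀ D : ℕ, D₀ ≤ D →
          (y = ∑ d ∈ Finset.range D ×ˢ Finset.range D,
              algebraMap ℤ_[p] K
                (MvPowerSeries.coeff (R := ℤ_[p]) (Finsupp.single 0 d.1 + Finsupp.single 1 d.2) F) *
                (w₁ - 1) ^ d.1 * (w₂ - 1) ^ d.2) ∨
          B ≤ v (y - ∑ d ∈ Finset.range D ×ˢ Finset.range D,
              algebraMap ℤ_[p] K
                (MvPowerSeries.coeff (R := ℤ_[p]) (Finsupp.single 0 d.1 + Finsupp.single 1 d.2) F) *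
                (w₁ - 1) ^ d.1 * (w₂ - 1) ^ d.2)) →
        v y = (a : ℚ) + (b : ℚ) / ((p ^ m).totient : ℚ) + (c : ℚ) / ((p ^ n).totient : ℚ) := by
  have hp : p.Prime := Fact.out
  have hV := AddValuation.ofNeZero_extendsPadicValuation (hmul := hmul) (hadd := hadd) hcompat
  obtain ⟨b, c, hbc, hmin⟩ :=
    exists_forall_toLex_le (fun i j => ¬ (p : ℤ_[p]) ∣ MvPowerSeries.coeff₂ i j G) <| by
      obtain ⟨d, hd⟩ := hG
      exact ⟨d 0, d 1, by rwa [MvPowerSeries.coeff₂_eq_coeff]⟩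
  refine ⟨b, c, b + c + 1, c, fun m n hm hn w₁ w₂ h₁ h₂ y hy => ?_⟩
  have hw₁ := (AddValuation.ofNeZero v hmul hadd).map_sub_one_of_isPrimitiveRoot hV.map_p
    (by omega) h₁
  have hw₂ := (AddValuation.ofNeZero v hmul hadd).map_sub_one_of_isPrimitiveRoot hV.map_p
    (by omega) h₂
  have hφn : (0 : ℚ) < 1 / (p ^ n).totient := by
    have := Nat.totient_pos.2 (pow_pos hp.pos n)
    positivity
  refine AddValuation.ofNeZero_eq_of_approx (hmul := hmul) (hadd := hadd)
    (s := MvPowerSeries.squarePartialSum F (w₁ - 1) (w₂ - 1)) hy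
    (Filter.eventually_atTop.2 ⟨max b c + 1, fun D hD => ?_⟩)
  rw [hFG, hV.map_squarePartialSum_C_mul a hbc hmin hw₁ hw₂ hφn
    (mul_one_div_totient_lt hp (by omega) hn) (add_mul_one_div_totient_lt_one hp hm (by omega))
    (by omega) (by omega)]
  simp only [mul_one_div]

/-- Let `F ∈ ℤ_p[[X, Y]]` be a nonzero power series, written `F = p^a·G`
with `G ∉ p·ℤ_p[[X,Y]]`.  There are integers `b, c ≥ 0` and `n₀` such that for all pairs
`(w₁, w₂)` of `p`-power roots of unity with `ord(w₁) = m ≥ n₀` and `n − m` sufficiently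
large (`ord(w₂) = n`), one has `ord_p(F(w₁ − 1, w₂ − 1)) = a + b/φ(p^m) + c/φ(p^n)`.
Here the roots of unity live in a field `K` with an additive valuation `v` extending the
`p`-adic valuation of `ℤ_p`, and `F(w₁ − 1, w₂ − 1)` is taken to be any element `y` to
which the partial sums of the series converge. -/
theorem weierstrass_valuation_of_power_series (p : ℕ) [Fact p.Prime] (hodd : Odd p)
    (K : Type*) [Field K] [Algebra ℤ_[p] K] (v : K → ℚ)
    (hmul : ∀ x y : K, x ≠ 0 → y ≠ 0 → v (x * y) = v x + v y)
    (hadd : ∀ x y : K, x ≠ 0 → y ≠ 0 → x + y ≠ 0 → min (v x) (v y) ≤ v (x + y))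
    (hcompat : ∀ x : ℤ_[p], x ≠ 0 → v (algebraMap ℤ_[p] K x) = (x.valuation : ℚ))
    (F : MvPowerSeries (Fin 2) ℤ_[p]) (hF : F ≠ 0)
    (a : ℕ) (G : MvPowerSeries (Fin 2) ℤ_[p])
    (hFG : F = (MvPowerSeries.C (σ := Fin 2) (R := ℤ_[p]) ((p : ℤ_[p]) ^ a)) * G)
    (hG : ∃ d : (Fin 2) →₀ ℕ, ¬ (p : ℤ_[p]) ∣ MvPowerSeries.coeff (R := ℤ_[p]) d G) :
    ∃ (b c n₀ N : ℕ), ∀ m n : ℕ, n₀ ≤ m → m + N ≤ n →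
      ∀ w₁ w₂ : K, IsPrimitiveRoot w₁ (p ^ m) → IsPrimitiveRoot w₂ (p ^ n) →
      ∀ y : K,
        (∀ B : ℚ, ∃ D₀ : ℕ, ∀ D : ℕ, D₀ ≤ D →
          (y = ∑ d ∈ Finset.range D ×ˢ Finset.range D,
              algebraMap ℤ_[p] K
                (MvPowerSeries.coeff (R := ℤ_[p]) (Finsupp.single 0 d.1 + Finsupp.single 1 d.2) F) *
                (w₁ - 1) ^ d.1 * (w₂ - 1) ^ d.2) ∨
          B ≤ v (y - ∑ d ∈ Finset.range D ×ˢ Finset.range D,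
              algebraMap ℤ_[p] K
                (MvPowerSeries.coeff (R := ℤ_[p]) (Finsupp.single 0 d.1 + Finsupp.single 1 d.2) F) *
                (w₁ - 1) ^ d.1 * (w₂ - 1) ^ d.2)) →
        v y = (a : ℚ) + (b : ℚ) / ((p ^ m).totient : ℚ) + (c : ℚ) / ((p ^ n).totient : ℚ) :=
  weierstrass_valuation_of_power_series_general p K v hmul hadd hcompat F a G hFG hG
end

section
/- Let p be an odd prime and r, s, r', s' positive integers with r ≠ r' or s ≠ s'. Suppose two rational numbers have the forms V = v + h(r,♯or♭) + h(s,♯or♭) + b/φ(p^r) + c/φ(p^s) and V' = v' + h(r,·) + h(s,·) + b'/φ(p^r) + c'/φ(p^s), where v, v', b, c, b', c' are integers and h(n,♯), h(n,♭) are the explicit valuations from Proposition 5.11 (e.g., h(n,♯) = 1 + Σ_{i=1}^{(n−1)/2} p^{1−2i} for odd n). If the ♯/♭ labels differ in at least one coordinate, then V ≠ V' for all r, s with r, s, |r−s| sufficiently large. -/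
open Finset

/-- The explicit valuations `h(n, ♯)` and `h(n, ♭)` from Proposition 5.11 of the paper
(`true` stands for `♯`, `false` for `♭`). -/
noncomputable def hval (p n : ℕ) : Bool → ℚ
  | true =>
      if Odd n then 1 + ∑ i ∈ Finset.Icc 1 ((n - 1) / 2), (p : ℚ) ^ (1 - 2 * (i : ℤ))
      else ∑ i ∈ Finset.Icc 1 (n / 2), (p : ℚ) ^ (1 - 2 * (i : ℤ))
  | false =>
      if Odd n then ∑ i ∈ Finset.Icc 1 ((n - 1) / 2), (p : ℚ) ^ (-(2 * (i : ℤ)))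
      else 1 + ∑ i ∈ Finset.Icc 1 (n / 2 - 1), (p : ℚ) ^ (-(2 * (i : ℤ)))

/-! Multiplying by `p² - 1` turns `h(n,♯) - h(n,♭)` into an integer plus `±(p - 1)/p^(n-1)`
and `B/φ(p^n)` into `(p + 1)B/p^(n-1)`. Hence `(p² - 1)(V - V') = M + N_r/p^r + N_s/p^s` with
integers `M, N_r, N_s`, where `N_r = p(±(p - 1) + (p + 1)(b - b'))` if the labels at `r` differ,
so `N_r ≠ 0` because `p + 1 ∤ p - 1`. Clearing denominators, `p^|r-s|` divides the numerator
carried by the larger exponent and then `p^min(r,s)` the other one; both numerators are bounded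
independently of `r, s`, so they vanish once `r`, `s` and `|r - s|` are large. -/

lemma sq_sub_one_mul_sum_zpow_neg_two_mul {K : Type*} [Field K] {x : K} (hx : x ≠ 0) (m : ℕ) :
    (x ^ 2 - 1) * ∑ i ∈ Icc 1 m, x ^ (-(2 * (i : ℤ))) = 1 - x ^ (-(2 * (m : ℤ))) := by
  induction m with
  | zero => simp
  | succ m ih =>
    have hstep : x ^ (-(2 * ((m + 1 : ℕ) : ℤ))) = x ^ (-(2 * (m : ℤ))) / x ^ 2 := by
      rw [← zpow_natCast x 2, ← zpow_sub₀ hx]; push_cast; ring_nf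
    rw [sum_Icc_succ_top (by omega), mul_add, ih, hstep]
    field_simp
    ring

lemma sum_zpow_one_sub_two_mul {K : Type*} [Field K] {x : K} (hx : x ≠ 0) (m : ℕ) :
    ∑ i ∈ Icc 1 m, x ^ (1 - 2 * (i : ℤ)) = x * ∑ i ∈ Icc 1 m, x ^ (-(2 * (i : ℤ))) := by
  rw [mul_sum]
  refine sum_congr rfl fun i _ => ?_
  rw [sub_eq_add_neg, zpow_add₀ hx, zpow_one]

lemma add_one_mul_hval_sub_of_odd {p n : ℕ} (hp : p ≠ 0) (hn : Odd n) :
    ((p : ℚ) + 1) * (hval p n true - hval p n false) = p + 2 - p / p ^ n := by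
  obtain ⟨k, rfl⟩ := hn
  have hp' : (p : ℚ) ≠ 0 := by exact_mod_cast hp
  have hpow : (p : ℚ) ^ (-(2 * (k : ℤ))) = p / p ^ (2 * k + 1) := by
    rw [pow_succ, ← zpow_natCast, zpow_neg]; push_cast; field_simp
  have hk : (2 * k + 1 - 1) / 2 = k := by omega
  simp only [hval, odd_two_mul_add_one, if_true, hk, sum_zpow_one_sub_two_mul hp']
  rw [← hpow]
  linear_combination sq_sub_one_mul_sum_zpow_neg_two_mul hp' k

lemma add_one_mul_hval_sub_of_even {p n : ℕ} (hp : p ≠ 0) (hn : Even n) (hn0 : n ≠ 0) :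
    ((p : ℚ) + 1) * (hval p n true - hval p n false) = -p + p / p ^ n := by
  obtain ⟨j, rfl⟩ : ∃ j, n = 2 * (j + 1) := by obtain ⟨k, rfl⟩ := hn; exact ⟨k - 1, by omega⟩
  have hp' : (p : ℚ) ≠ 0 := by exact_mod_cast hp
  have hz : (p : ℚ) ^ (-(2 * ((j + 1 : ℕ) : ℤ))) = 1 / p ^ (2 * (j + 1)) := by
    rw [show 2 * ((j + 1 : ℕ) : ℤ) = ((2 * (j + 1) : ℕ) : ℤ) by push_cast; ring, zpow_neg,
      zpow_natCast, one_div]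
  have hy : (p : ℚ) ^ (-(2 * (j : ℤ))) = p ^ 2 * p ^ (-(2 * ((j + 1 : ℕ) : ℤ))) := by
    rw [← zpow_natCast _ 2, ← zpow_add₀ hp']; push_cast; ring_nf
  have hne : ¬Odd (2 * (j + 1)) := Nat.not_odd_iff_even.mpr (even_two_mul _)
  rw [hval, hval, if_neg hne, if_neg hne, Nat.mul_div_cancel_left _ two_pos, Nat.add_sub_cancel,
    sum_zpow_one_sub_two_mul hp', sum_Icc_succ_top (by omega : 1 ≤ j + 1), hz]
  rw [hz] at hy
  linear_combination sq_sub_one_mul_sum_zpow_neg_two_mul hp' j - hy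

lemma exists_add_one_mul_hval_sub {p n : ℕ} (hp : p ≠ 0) (hn : n ≠ 0) :
    ∃ μ δ : ℤ, |δ| = 1 ∧
      ((p : ℚ) + 1) * (hval p n true - hval p n false) = μ + δ * p / p ^ n := by
  rcases n.even_or_odd with h | h
  · exact ⟨-p, 1, abs_one, by rw [add_one_mul_hval_sub_of_even hp h hn]; push_cast; ring⟩
  · exact ⟨p + 2, -1, by simp, by rw [add_one_mul_hval_sub_of_odd hp h]; push_cast; ring⟩

lemma exists_hval_sub_hval (p n : ℕ) (a a' : Bool) :
    ∃ e : ℤ, |e| ≤ 1 ∧ (a ≠ a' → e ≠ 0) ∧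
      hval p n a - hval p n a' = e * (hval p n true - hval p n false) := by
  refine ⟨(a.toNat : ℤ) - a'.toNat, ?_, ?_, ?_⟩ <;> cases a <;> cases a' <;> simp

lemma mul_sub_one_add_mul_add_one_ne_zero {p u : ℤ} (hp : 2 ≤ p) (hu : |u| = 1) (B : ℤ) :
    u * (p - 1) + B * (p + 1) ≠ 0 := by
  intro h
  have hdvd : p + 1 ∣ u * (p - 1) := ⟨-B, by linear_combination h⟩
  have hzero := Int.eq_zero_of_abs_lt_dvd hdvd (by rw [abs_mul, hu, abs_of_pos] <;> linarith)
  rcases mul_eq_zero.mp hzero with h0 | h0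
  · simp [h0] at hu
  · omega

lemma sq_sub_one_mul_div_totient_prime_pow {p n : ℕ} (hp : p.Prime) (hn : n ≠ 0) (x : ℚ) :
    ((p : ℚ) ^ 2 - 1) * (x / (p ^ n).totient) = p * (x * (p + 1)) / p ^ n := by
  obtain ⟨k, rfl⟩ : ∃ k, n = k + 1 := ⟨n - 1, by omega⟩
  have hp1 : (p : ℚ) - 1 ≠ 0 := sub_ne_zero.mpr (by exact_mod_cast hp.one_lt.ne')
  have hp' : (p : ℚ) ≠ 0 := by exact_mod_cast hp.ne_zero
  rw [Nat.totient_prime_pow_succ hp, Nat.cast_mul, Nat.cast_sub hp.one_le]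
  push_cast
  field_simp
  ring

lemma exists_sq_sub_one_mul_hval_sub_add_div_totient {p n : ℕ} (hp : p.Prime) (hn : n ≠ 0)
    (a a' : Bool) (B : ℤ) :
    ∃ m N : ℤ, (a ≠ a' → N ≠ 0) ∧ |N| ≤ p * (p + 1) * (1 + |B|) ∧
      ((p : ℚ) ^ 2 - 1) * (hval p n a - hval p n a' + B / (p ^ n).totient) = m + N / p ^ n := by
  obtain ⟨μ, δ, hδ, hD⟩ := exists_add_one_mul_hval_sub hp.ne_zero hn
  obtain ⟨e, he, hne, hdiff⟩ := exists_hval_sub_hval p n a a'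
  have hp2 : (2 : ℤ) ≤ p := by exact_mod_cast hp.two_le
  refine ⟨e * (p - 1) * μ, p * (e * δ * (p - 1) + B * (p + 1)), fun h => ?_, ?_, ?_⟩
  · have heδ : |e * δ| = 1 := by rw [abs_mul, hδ, mul_one]; have := abs_pos.mpr (hne h); omega
    exact mul_ne_zero (by omega) (mul_sub_one_add_mul_add_one_ne_zero hp2 heδ B)
  · have heδ : |e * δ * (p - 1)| ≤ p + 1 := by
      rw [abs_mul, abs_mul, hδ, mul_one, abs_of_pos (by omega : (0 : ℤ) < p - 1)]
      nlinarith
    rw [abs_mul, abs_of_pos (by omega : (0 : ℤ) < p), mul_assoc (p : ℤ)]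
    refine mul_le_mul_of_nonneg_left ?_ (by omega)
    calc |e * δ * (p - 1) + B * (p + 1)| ≤ |e * δ * (p - 1)| + |B * (p + 1)| := abs_add_le _ _
      _ ≤ (p + 1) * (1 + |B|) := by
        rw [abs_mul B, abs_of_pos (by omega : (0 : ℤ) < p + 1)]; linarith
  · rw [mul_add, sq_sub_one_mul_div_totient_prime_pow hp hn, hdiff,
      show ((p : ℚ) ^ 2 - 1) * (e * (hval p n true - hval p n false))
        = e * (p - 1) * ((p + 1) * (hval p n true - hval p n false)) by ring, hD]
    push_cast
    ring

lemma eq_zero_of_add_div_pow_add_div_pow_of_le {p : ℕ} (hp : p ≠ 0) {M A C : ℤ} {a b : ℕ}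
    (hba : b ≤ a) (hA : |A| < p ^ (a - b)) (hC : |C| < p ^ b)
    (h : (M : ℚ) + A / p ^ a + C / p ^ b = 0) : A = 0 ∧ C = 0 := by
  obtain ⟨d, rfl⟩ := Nat.exists_eq_add_of_le hba
  rw [Nat.add_sub_cancel_left] at hA
  have hp' : (p : ℚ) ≠ 0 := by exact_mod_cast hp
  have hZ : M * p ^ (b + d) + A + C * p ^ d = 0 := by
    have : (M * p ^ (b + d) + A + C * p ^ d : ℚ) =
        p ^ (b + d) * (M + A / p ^ (b + d) + C / p ^ b) := by
      rw [pow_add]; field_simp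
    rw [h, mul_zero] at this
    exact_mod_cast this
  have hA0 : A = 0 := Int.eq_zero_of_abs_lt_dvd ⟨-(M * p ^ b + C), by linear_combination hZ⟩ hA
  have hC0 : C = 0 := by
    have hMC : (p : ℤ) ^ d * (M * p ^ b + C) = 0 := by linear_combination hZ - hA0
    have := (mul_eq_zero.mp hMC).resolve_left (pow_ne_zero _ (by exact_mod_cast hp))
    exact Int.eq_zero_of_abs_lt_dvd ⟨-M, by linear_combination this⟩ hC
  exact ⟨hA0, hC0⟩

lemma eq_zero_of_add_div_pow_add_div_pow {p : ℕ} (hp : 2 ≤ p) {M A C : ℤ} {a b K : ℕ}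
    (hA : |A| ≤ K) (hC : |C| ≤ K) (ha : K ≤ a) (hb : K ≤ b) (hab : (K : ℤ) ≤ |(a : ℤ) - b|)
    (h : (M : ℚ) + A / p ^ a + C / p ^ b = 0) : A = 0 ∧ C = 0 := by
  have hlt {n : ℕ} (hn : K ≤ n) : (K : ℤ) < p ^ n := by
    exact_mod_cast (Nat.lt_pow_self hp).trans_le (Nat.pow_le_pow_right (by omega) hn)
  rcases le_total b a with hba | hab'
  · rw [abs_of_nonneg (by omega)] at hab
    exact eq_zero_of_add_div_pow_add_div_pow_of_le (by omega) hba (hA.trans_lt (hlt (by omega)))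
      (hC.trans_lt (hlt hb)) h
  · rw [abs_of_nonpos (by omega)] at hab
    have h' : (M : ℚ) + C / p ^ b + A / p ^ a = 0 := by linear_combination h
    exact (eq_zero_of_add_div_pow_add_div_pow_of_le (by omega) hab' (hC.trans_lt (hlt (by omega)))
      (hA.trans_lt (hlt ha)) h').symm

theorem sharp_flat_valuations_distinct_general (p : ℕ) (hp : p.Prime)
    (v v' b c b' c' : ℤ) (s₁ s₂ s₁' s₂' : Bool)
    (hdiff : s₁ ≠ s₁' ∨ s₂ ≠ s₂') :
    ∃ N : ℕ, ∀ r s : ℕ, N ≤ r → N ≤ s → (N : ℤ) ≤ |(r : ℤ) - (s : ℤ)| →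
      (v : ℚ) + hval p r s₁ + hval p s s₂ +
          (b : ℚ) / ((p ^ r).totient : ℚ) + (c : ℚ) / ((p ^ s).totient : ℚ) ≠
        (v' : ℚ) + hval p r s₁' + hval p s s₂' +
          (b' : ℚ) / ((p ^ r).totient : ℚ) + (c' : ℚ) / ((p ^ s).totient : ℚ) := by
  obtain ⟨K, hK⟩ : ∃ K : ℕ, (K : ℤ) = p * (p + 1) * (1 + |b - b'| + |c - c'|) :=
    ⟨_, Int.toNat_of_nonneg (by positivity)⟩
  refine ⟨K + 1, fun r s hr hs hrs heq => ?_⟩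
  obtain ⟨m₁, N₁, hN₁, hbound₁, h₁⟩ :=
    exists_sq_sub_one_mul_hval_sub_add_div_totient hp (n := r) (by omega) s₁ s₁' (b - b')
  obtain ⟨m₂, N₂, hN₂, hbound₂, h₂⟩ :=
    exists_sq_sub_one_mul_hval_sub_add_div_totient hp (n := s) (by omega) s₂ s₂' (c - c')
  have hsum : (((p ^ 2 - 1) * (v - v') + m₁ + m₂ : ℤ) : ℚ) + N₁ / p ^ r + N₂ / p ^ s = 0 := by
    push_cast at h₁ h₂ ⊢
    linear_combination ((p : ℚ) ^ 2 - 1) * heq - h₁ - h₂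
  have hle (x y : ℤ) : (p : ℤ) * (p + 1) * (1 + |x|) ≤ p * (p + 1) * (1 + |x| + |y|) :=
    mul_le_mul_of_nonneg_left (le_add_of_nonneg_right (abs_nonneg y)) (by positivity)
  obtain ⟨rfl, rfl⟩ := eq_zero_of_add_div_pow_add_div_pow hp.two_le (K := K)
    (hbound₁.trans ((hle _ (c - c')).trans_eq hK.symm))
    (hbound₂.trans ((hle _ (b - b')).trans_eq (by rw [hK]; ring)))
    (by omega) (by omega) (by push_cast at hrs; linarith) hsum
  tauto

/-- Consider `V = v + h(r,·) + h(s,·) + b/φ(p^r) + c/φ(p^s)` and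
`V' = v' + h(r,·) + h(s,·) + b'/φ(p^r) + c'/φ(p^s)` with integer constants, where the
`♯/♭` labels of `V` and `V'` differ in at least one coordinate.  Then `V ≠ V'` for all
`r, s` with `r`, `s`, `|r − s|` sufficiently large. -/
theorem sharp_flat_valuations_distinct (p : ℕ) (hp : p.Prime) (hodd : Odd p)
    (v v' b c b' c' : ℤ) (s₁ s₂ s₁' s₂' : Bool)
    (hdiff : s₁ ≠ s₁' ∨ s₂ ≠ s₂') :
    ∃ N : ℕ, ∀ r s : ℕ, N ≤ r → N ≤ s → (N : ℤ) ≤ |(r : ℤ) - (s : ℤ)| →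
      (v : ℚ) + hval p r s₁ + hval p s s₂ +
          (b : ℚ) / ((p ^ r).totient : ℚ) + (c : ℚ) / ((p ^ s).totient : ℚ) ≠
        (v' : ℚ) + hval p r s₁' + hval p s s₂' +
          (b' : ℚ) / ((p ^ r).totient : ℚ) + (c' : ℚ) / ((p ^ s).totient : ℚ) :=
  sharp_flat_valuations_distinct_general p hp v v' b c b' c' s₁ s₂ s₁' s₂' hdiff
end
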